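/- Let θ₀ ∈ ℂ, a ∈ ℂ∖{0}, and let Λ₀ be the 2×2 matrix with rows (θ₀/2 + a, −1) and (a(θ₀+a), −θ₀/2 − a). Then the system t·dU₀/dt = [U∞, Λ₀ + U₀], t·dU∞/dt = t·[J, −Λ₀ − U₀ + U∞] admits a solution (U₀(t), U∞(t)) holomorphic in a neighborhood of t = 0, given by convergent power series U₀(t) = Σ_{j≥1} U⁰_j t^j and U∞(t) = Σ_{j≥1} U^∞_j t^j, where the entries of every coefficient matrix U⁰_j, U^∞_j lie in ℚ[θ₀, a]; moreover both diagonal entries of U∞(t) vanish identically. -/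

import Mathlib

noncomputable section
open Complex

def Jmat : Matrix (Fin 2) (Fin 2) ℂ := !![1, 0; 0, -1]

/-!
Writing `U₀ = ∑ Bₙ t^(n+1)` and `U∞ = ∑ Cₙ t^(n+1)`, the system is equivalent to the recursion
`C₀ = [J, -Λ₀]`, `B₀ = [C₀, Λ₀]`, `(n+2) C_{n+1} = [J, Cₙ - Bₙ]`,
`(n+2) B_{n+1} = [C_{n+1}, Λ₀] + ∑_{k+l=n} [C_k, B_l]`, which has rational coefficients; solving it
over `ℚ[θ₀, a]` and specialising shows that the coefficients are polynomials in `θ₀, a`.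
The factor `n+2` absorbs the `n+1` terms of the convolution, so in a submultiplicative matrix norm
an induction gives `‖Bₙ‖, ‖Cₙ‖ ≤ K Mⁿ`. On a disc of radius `< 1/M` the series therefore converge,
can be differentiated termwise and multiplied as Cauchy products, which turns the recursion back
into the system. Every `Cₙ` is a commutator with the diagonal matrix `J`, so `U∞` has zero
diagonal.
-/

open Finset

section PowerSeries

variable {E : Type*} [NormedAddCommGroup E] [NormedSpace ℂ E]

def tsumPowSucc (c : ℕ → E) (z : ℂ) : E := ∑' n, z ^ (n + 1) • c n

theorem norm_le_of_natCast_smul_le {k : ℕ} (hk : 0 < k) {x : E} {b : ℝ}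
    (h : ‖(k : ℂ) • x‖ ≤ k * b) : ‖x‖ ≤ b := by
  rw [norm_smul, Complex.norm_natCast] at h
  exact le_of_mul_le_mul_left h (by exact_mod_cast hk)

theorem summable_succ_mul_geometric {q : ℝ} (hq₀ : 0 ≤ q) (hq : q < 1) :
    Summable fun n : ℕ => ((n : ℝ) + 1) * q ^ n := by
  have hq' : ‖q‖ < 1 := by rwa [Real.norm_of_nonneg hq₀]
  refine ((summable_pow_mul_geometric_of_norm_lt_one 1 hq').add
    (summable_geometric_of_lt_one hq₀ hq)).congr fun n => ?_
  ring

variable {c : ℕ → E} {K M r : ℝ}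

theorem norm_succ_mul_pow_smul_le (hc : ∀ n, ‖c n‖ ≤ K * M ^ n) {z : ℂ} (hz : ‖z‖ ≤ r)
    (n : ℕ) : ‖(((n + 1 : ℕ) : ℂ) * z ^ n) • c n‖ ≤ K * (((n : ℝ) + 1) * (r * M) ^ n) := by
  rw [norm_smul, norm_mul, norm_pow, Complex.norm_natCast, mul_pow]
  push_cast
  have hKM : 0 ≤ K * M ^ n := (norm_nonneg _).trans (hc n)
  calc ((n : ℝ) + 1) * ‖z‖ ^ n * ‖c n‖ ≤ ((n : ℝ) + 1) * r ^ n * (K * M ^ n) := by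
        have hr : 0 ≤ r := (norm_nonneg z).trans hz
        exact mul_le_mul (by gcongr) (hc n) (norm_nonneg _) (by positivity)
    _ = K * (((n : ℝ) + 1) * (r ^ n * M ^ n)) := by ring

theorem summable_norm_succ_mul_pow_smul (hc : ∀ n, ‖c n‖ ≤ K * M ^ n) (hM : 0 ≤ M) {z : ℂ}
    (hz : ‖z‖ * M < 1) : Summable fun n => ‖(((n + 1 : ℕ) : ℂ) * z ^ n) • c n‖ :=
  .of_nonneg_of_le (fun _ => norm_nonneg _) (norm_succ_mul_pow_smul_le hc le_rfl)
    ((summable_succ_mul_geometric (by positivity) hz).mul_left K)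

theorem summable_norm_pow_succ_smul (hc : ∀ n, ‖c n‖ ≤ K * M ^ n) (hM : 0 ≤ M) {z : ℂ}
    (hz : ‖z‖ * M < 1) : Summable fun n => ‖z ^ (n + 1) • c n‖ := by
  refine .of_nonneg_of_le (fun _ => norm_nonneg _) (fun n => ?_)
    ((summable_norm_succ_mul_pow_smul hc hM hz).mul_left ‖z‖)
  rw [norm_smul, norm_smul, norm_mul, norm_pow, norm_pow, Complex.norm_natCast, pow_succ]
  have h₁ : (1 : ℝ) ≤ ((n + 1 : ℕ) : ℝ) := by exact_mod_cast Nat.le_add_left 1 n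
  have h₀ : 0 ≤ ‖z‖ * (‖z‖ ^ n * ‖c n‖) := by positivity
  calc ‖z‖ ^ n * ‖z‖ * ‖c n‖ = ‖z‖ * (‖z‖ ^ n * ‖c n‖) * 1 := by ring
    _ ≤ ‖z‖ * (‖z‖ ^ n * ‖c n‖) * ((n + 1 : ℕ) : ℝ) := by gcongr
    _ = _ := by ring

theorem norm_mul_lt_one_of_mem_ball (hM : 0 ≤ M) (hr : r * M < 1) {z : ℂ}
    (hz : z ∈ Metric.ball 0 r) : ‖z‖ * M < 1 :=
  (mul_le_mul_of_nonneg_right (mem_ball_zero_iff.1 hz).le hM).trans_lt hr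

theorem hasDerivAt_tsumPowSucc [CompleteSpace E] (hc : ∀ n, ‖c n‖ ≤ K * M ^ n) (hM : 0 ≤ M)
    (hr : r * M < 1) {z : ℂ} (hz : z ∈ Metric.ball 0 r) {d : E}
    (hd : HasSum (fun n => (((n + 1 : ℕ) : ℂ) * z ^ n) • c n) d) :
    HasDerivAt (tsumPowSucc c) d z := by
  have hr₀ : 0 < r := Metric.pos_of_mem_ball hz
  rw [← hd.tsum_eq]
  refine hasDerivAt_tsum_of_isPreconnected (g := fun n y => y ^ (n + 1) • c n)
    (g' := fun n y => (((n + 1 : ℕ) : ℂ) * y ^ n) • c n)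
    ((summable_succ_mul_geometric (by positivity) hr).mul_left K) Metric.isOpen_ball
    (convex_ball 0 r).isPreconnected (fun n y _ => ?_) (fun n y hy => ?_)
    (Metric.mem_ball_self hr₀) (by simp) hz
  · simpa using (hasDerivAt_pow (n + 1) y).smul_const (c n)
  · exact norm_succ_mul_pow_smul_le hc (by simpa using (Metric.mem_ball.1 hy).le) n

end PowerSeries

section LieSeries

variable {A : Type*} [Ring A] [TopologicalSpace A] [IsTopologicalRing A] {f : ℕ → A} {s : A}

theorem HasSum.lie_left (hf : HasSum f s) (a : A) : HasSum (fun n => ⁅a, f n⁆) ⁅a, s⁆ := by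
  simpa only [Ring.lie_def] using (hf.mul_left a).sub (hf.mul_right a)

theorem HasSum.lie_right (hf : HasSum f s) (a : A) : HasSum (fun n => ⁅f n, a⁆) ⁅s, a⁆ := by
  simpa only [Ring.lie_def] using (hf.mul_right a).sub (hf.mul_left a)

end LieSeries

theorem norm_lie_le {A : Type*} [NormedRing A] (x y : A) : ‖⁅x, y⁆‖ ≤ 2 * ‖x‖ * ‖y‖ := by
  rw [Ring.lie_def]
  calc ‖x * y - y * x‖ ≤ ‖x * y‖ + ‖y * x‖ := norm_sub_le _ _
    _ ≤ ‖x‖ * ‖y‖ + ‖y‖ * ‖x‖ := add_le_add (norm_mul_le _ _) (norm_mul_le _ _)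
    _ = 2 * ‖x‖ * ‖y‖ := by ring

theorem norm_sum_antidiagonal_lie_le {A : Type*} [NormedRing A] {K M : ℝ} {f g : ℕ → A} {n : ℕ}
    (hf : ∀ k ≤ n, ‖f k‖ ≤ K * M ^ k) (hg : ∀ k ≤ n, ‖g k‖ ≤ K * M ^ k) :
    ‖∑ kl ∈ antidiagonal n, ⁅f kl.1, g kl.2⁆‖ ≤ (n + 1) * (2 * K ^ 2 * M ^ n) := by
  have hterm : ∀ kl ∈ antidiagonal n, ‖⁅f kl.1, g kl.2⁆‖ ≤ 2 * K ^ 2 * M ^ n := by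
    intro kl hkl
    have hkl := mem_antidiagonal.1 hkl
    have h₁ := hf kl.1 (by omega)
    have h₂ := hg kl.2 (by omega)
    calc ‖⁅f kl.1, g kl.2⁆‖ ≤ 2 * ‖f kl.1‖ * ‖g kl.2‖ := norm_lie_le _ _
      _ ≤ 2 * (K * M ^ kl.1) * (K * M ^ kl.2) := by
        have := (norm_nonneg _).trans h₁
        gcongr
      _ = 2 * K ^ 2 * M ^ n := by rw [← hkl, pow_add]; ring
  calc ‖∑ kl ∈ antidiagonal n, ⁅f kl.1, g kl.2⁆‖
      ≤ ∑ kl ∈ antidiagonal n, ‖⁅f kl.1, g kl.2⁆‖ := norm_sum_le _ _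
    _ ≤ ∑ _kl ∈ antidiagonal n, 2 * K ^ 2 * M ^ n := sum_le_sum hterm
    _ = (n + 1) * (2 * K ^ 2 * M ^ n) := by
      rw [sum_const, Nat.card_antidiagonal, nsmul_eq_mul]; push_cast; ring

section Cauchy

variable {A : Type*} [NormedRing A] [NormedAlgebra ℂ A] [CompleteSpace A]

theorem hasSum_pow_add_two_smul_sum_antidiagonal {f g : ℕ → A} {z : ℂ}
    (hf : Summable fun n => ‖z ^ (n + 1) • f n‖) (hg : Summable fun n => ‖z ^ (n + 1) • g n‖) :
    HasSum (fun n => z ^ (n + 2) • ∑ kl ∈ antidiagonal n, f kl.1 * g kl.2)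
      (tsumPowSucc f z * tsumPowSucc g z) := by
  have key : ∀ n, ∑ kl ∈ antidiagonal n, (z ^ (kl.1 + 1) • f kl.1) * (z ^ (kl.2 + 1) • g kl.2) =
      z ^ (n + 2) • ∑ kl ∈ antidiagonal n, f kl.1 * g kl.2 := by
    intro n
    rw [smul_sum]
    refine sum_congr rfl fun kl hkl => ?_
    rw [smul_mul_smul_comm, ← pow_add, ← mem_antidiagonal.1 hkl]
    ring_nf
  have := (summable_norm_sum_mul_antidiagonal_of_summable_norm hf hg).of_norm.hasSum
  rw [← tsum_mul_tsum_eq_tsum_sum_antidiagonal_of_summable_norm hf hg] at this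
  simpa only [key, tsumPowSucc] using this

theorem hasSum_pow_add_two_smul_sum_antidiagonal_lie {f g : ℕ → A} {z : ℂ}
    (hf : Summable fun n => ‖z ^ (n + 1) • f n‖) (hg : Summable fun n => ‖z ^ (n + 1) • g n‖) :
    HasSum (fun n => z ^ (n + 2) • ∑ kl ∈ antidiagonal n, ⁅f kl.1, g kl.2⁆)
      ⁅tsumPowSucc f z, tsumPowSucc g z⁆ := by
  rw [Ring.lie_def]
  refine ((hasSum_pow_add_two_smul_sum_antidiagonal hf hg).sub
    (hasSum_pow_add_two_smul_sum_antidiagonal hg hf)).congr_fun fun n => ?_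
  rw [← smul_sub, ← Finset.Nat.sum_antidiagonal_swap (f := fun kl => g kl.1 * f kl.2),
    ← sum_sub_distrib]
  simp only [Ring.lie_def, Prod.fst_swap, Prod.snd_swap]

end Cauchy

section FormalSolution

/-- `B n` and `C n` are the coefficients of `t ^ (n + 1)` in `U₀` and `U∞`: the fields compare
coefficients in `t • U₀' = ⁅U∞, Λ + U₀⁆` and `U∞' = ⁅J, -Λ - U₀ + U∞⁆`. -/
structure IsFormalSolution {A : Type*} [Ring A] [Module ℂ A] (J Λ : A) (B C : ℕ → A) : Prop where
  C_zero : C 0 = ⁅J, -Λ⁆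
  B_zero : B 0 = ⁅C 0, Λ⁆
  C_succ (n : ℕ) : ((n + 2 : ℕ) : ℂ) • C (n + 1) = ⁅J, C n - B n⁆
  B_succ (n : ℕ) :
    ((n + 2 : ℕ) : ℂ) • B (n + 1) = ⁅C (n + 1), Λ⁆ + ∑ kl ∈ antidiagonal n, ⁅C kl.1, B kl.2⁆

variable {A : Type*} [NormedRing A] [NormedAlgebra ℂ A] {J Λ : A} {B C : ℕ → A} {K M : ℝ}

namespace IsFormalSolution

variable (h : IsFormalSolution J Λ B C)
include h

theorem norm_C_succ_le (n : ℕ) (hB : ‖B n‖ ≤ K * M ^ n) (hC : ‖C n‖ ≤ K * M ^ n) :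
    ‖C (n + 1)‖ ≤ 2 * ‖J‖ * (K * M ^ n) := by
  have hKM : 0 ≤ K * M ^ n := (norm_nonneg _).trans hB
  refine norm_le_of_natCast_smul_le (k := n + 2) (by omega) ?_
  rw [h.C_succ]
  calc ‖⁅J, C n - B n⁆‖ ≤ 2 * ‖J‖ * ‖C n - B n‖ := norm_lie_le _ _
    _ ≤ 2 * ‖J‖ * (K * M ^ n + K * M ^ n) := by
      gcongr
      exact (norm_sub_le _ _).trans (add_le_add hC hB)
    _ ≤ ((n + 2 : ℕ) : ℝ) * (2 * ‖J‖ * (K * M ^ n)) := by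
      push_cast
      have : 0 ≤ 2 * ‖J‖ * (K * M ^ n) := by positivity
      nlinarith [(Nat.cast_nonneg n : (0 : ℝ) ≤ n)]

theorem norm_B_succ_le (n : ℕ) (hB : ∀ k ≤ n, ‖B k‖ ≤ K * M ^ k)
    (hC : ∀ k ≤ n, ‖C k‖ ≤ K * M ^ k) :
    ‖B (n + 1)‖ ≤ (2 * ‖J‖ * ‖Λ‖ + 2 * K) * (K * M ^ n) := by
  have hKM : 0 ≤ K * M ^ n := (norm_nonneg _).trans (hB n le_rfl)
  have hC' := h.norm_C_succ_le n (hB n le_rfl) (hC n le_rfl)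
  refine norm_le_of_natCast_smul_le (k := n + 2) (by omega) ?_
  rw [h.B_succ]
  calc ‖⁅C (n + 1), Λ⁆ + ∑ kl ∈ antidiagonal n, ⁅C kl.1, B kl.2⁆‖
      ≤ 2 * ‖C (n + 1)‖ * ‖Λ‖ + (n + 1) * (2 * K ^ 2 * M ^ n) :=
        (norm_add_le _ _).trans (add_le_add (norm_lie_le _ _) (norm_sum_antidiagonal_lie_le hC hB))
    _ ≤ 2 * (2 * ‖J‖ * (K * M ^ n)) * ‖Λ‖ + (n + 1) * (2 * K ^ 2 * M ^ n) := by gcongr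
    _ ≤ ((n + 2 : ℕ) : ℝ) * ((2 * ‖J‖ * ‖Λ‖ + 2 * K) * (K * M ^ n)) := by
      push_cast
      have : 0 ≤ ‖J‖ * ‖Λ‖ * (K * M ^ n) := by positivity
      have hK : 0 ≤ K := by simpa using (norm_nonneg _).trans (hB 0 (Nat.zero_le n))
      have : 0 ≤ K ^ 2 * M ^ n := by nlinarith
      nlinarith [(Nat.cast_nonneg n : (0 : ℝ) ≤ n)]

theorem exists_norm_le : ∃ K M : ℝ, 0 ≤ M ∧ ∀ n, ‖B n‖ ≤ K * M ^ n ∧ ‖C n‖ ≤ K * M ^ n := by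
  -- `K` bounds `‖B 0‖` and `‖C 0‖`; `M ≥ 2‖J‖` and `M ≥ 2‖J‖‖Λ‖ + 2K` let the two
  -- successor estimates propagate the bound `K * M ^ n`.
  set K := 2 * ‖J‖ * ‖Λ‖ + 4 * ‖J‖ * ‖Λ‖ ^ 2
  set M := 2 * ‖J‖ + 2 * ‖J‖ * ‖Λ‖ + 2 * K
  have hK₀ : 0 ≤ K := by positivity
  refine ⟨K, M, by positivity, fun n => ?_⟩
  induction n using Nat.strong_induction_on with
  | _ n ih =>
    cases n with
    | zero =>
      have hC₀ : ‖C 0‖ ≤ 2 * ‖J‖ * ‖Λ‖ := by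
        simpa only [h.C_zero, norm_neg] using norm_lie_le J (-Λ)
      have hB₀ : ‖B 0‖ ≤ 4 * ‖J‖ * ‖Λ‖ ^ 2 := by
        rw [h.B_zero]
        refine (norm_lie_le _ _).trans ?_
        nlinarith [norm_nonneg Λ]
      constructor <;> rw [pow_zero, mul_one] <;> nlinarith [norm_nonneg J, norm_nonneg Λ]
    | succ n =>
      have hB : ∀ k ≤ n, ‖B k‖ ≤ K * M ^ k := fun k hk => (ih k (by omega)).1
      have hC : ∀ k ≤ n, ‖C k‖ ≤ K * M ^ k := fun k hk => (ih k (by omega)).2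
      have hKM : 0 ≤ K * M ^ n := (norm_nonneg _).trans (hB n le_rfl)
      rw [pow_succ, mul_comm (M ^ n), ← mul_assoc, mul_comm K M, mul_assoc]
      constructor
      · exact (h.norm_B_succ_le n hB hC).trans (by gcongr; linarith [norm_nonneg J])
      · exact (h.norm_C_succ_le n (hB n le_rfl) (hC n le_rfl)).trans
          (by gcongr; nlinarith [norm_nonneg J, norm_nonneg Λ])

end IsFormalSolution

end FormalSolution


namespace IsFormalSolution

variable {A : Type*} [NormedRing A] [NormedAlgebra ℂ A] [CompleteSpace A] {J Λ : A} {B C : ℕ → A}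
  {K M : ℝ} (h : IsFormalSolution J Λ B C) (hB : ∀ n, ‖B n‖ ≤ K * M ^ n)
  (hC : ∀ n, ‖C n‖ ≤ K * M ^ n) (hM : 0 ≤ M) {z : ℂ}
include h hB hC hM

theorem hasSum_C (hz : ‖z‖ * M < 1) :
    HasSum (fun n => (((n + 1 : ℕ) : ℂ) * z ^ n) • C n)
      ⁅J, -Λ - tsumPowSucc B z + tsumPowSucc C z⁆ := by
  have hU₀ := (summable_norm_pow_succ_smul hB hM hz).of_norm.hasSum
  have hU := (summable_norm_pow_succ_smul hC hM hz).of_norm.hasSum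
  have htail : HasSum (fun n => (((n + 2 : ℕ) : ℂ) * z ^ (n + 1)) • C (n + 1))
      ⁅J, tsumPowSucc C z - tsumPowSucc B z⁆ := by
    refine ((hU.sub hU₀).lie_left J).congr_fun fun n => ?_
    rw [mul_comm, mul_smul, h.C_succ]
    simp only [Ring.lie_def, mul_smul_comm, smul_mul_assoc, smul_sub, mul_sub, sub_mul]
  have hsum := (hasSum_nat_add_iff (f := fun n => (((n + 1 : ℕ) : ℂ) * z ^ n) • C n) 1).1 htail
  rw [sum_range_one, zero_add, Nat.cast_one, pow_zero, mul_one, one_smul, h.C_zero] at hsum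
  have e : ⁅J, -Λ - tsumPowSucc B z + tsumPowSucc C z⁆ =
      ⁅J, tsumPowSucc C z - tsumPowSucc B z⁆ + ⁅J, -Λ⁆ := by
    simp only [Ring.lie_def]; noncomm_ring
  rwa [e]

theorem hasSum_B (hz : ‖z‖ * M < 1) :
    HasSum (fun n => (((n + 1 : ℕ) : ℂ) * z ^ (n + 1)) • B n)
      ⁅tsumPowSucc C z, Λ + tsumPowSucc B z⁆ := by
  have hB' := summable_norm_pow_succ_smul hB hM hz
  have hC' := summable_norm_pow_succ_smul hC hM hz
  have hlin := (hasSum_nat_add_iff' 1).2 (hC'.of_norm.hasSum.lie_right Λ)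
  have htail : HasSum (fun n => (((n + 2 : ℕ) : ℂ) * z ^ (n + 2)) • B (n + 1))
      (⁅tsumPowSucc C z, Λ⁆ - ∑ i ∈ range 1, ⁅z ^ (i + 1) • C i, Λ⁆ +
        ⁅tsumPowSucc C z, tsumPowSucc B z⁆) := by
    refine (hlin.add (hasSum_pow_add_two_smul_sum_antidiagonal_lie hC' hB')).congr_fun fun n => ?_
    rw [mul_comm, mul_smul, h.B_succ, smul_add]
    simp only [Ring.lie_def, smul_mul_assoc, mul_smul_comm, smul_sub]
  have hsum :=
    (hasSum_nat_add_iff (f := fun n => (((n + 1 : ℕ) : ℂ) * z ^ (n + 1)) • B n) 1).1 htail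
  rw [sum_range_one, sum_range_one, zero_add, Nat.cast_one, one_mul, pow_one, h.B_zero] at hsum
  have e : ⁅tsumPowSucc C z, Λ + tsumPowSucc B z⁆ = ⁅tsumPowSucc C z, Λ⁆ - ⁅z • C 0, Λ⁆ +
      ⁅tsumPowSucc C z, tsumPowSucc B z⁆ + z • ⁅C 0, Λ⁆ := by
    simp only [Ring.lie_def, smul_mul_assoc, mul_smul_comm, smul_sub]; noncomm_ring
  rwa [e]

theorem hasDerivAt_tsumPowSucc_C {r : ℝ} (hr : r * M < 1) (hz : z ∈ Metric.ball 0 r) :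
    HasDerivAt (tsumPowSucc C) ⁅J, -Λ - tsumPowSucc B z + tsumPowSucc C z⁆ z :=
  hasDerivAt_tsumPowSucc hC hM hr hz (h.hasSum_C hB hC hM (norm_mul_lt_one_of_mem_ball hM hr hz))

theorem exists_hasDerivAt_tsumPowSucc_B {r : ℝ} (hr : r * M < 1) (hz : z ∈ Metric.ball 0 r) :
    ∃ d, HasDerivAt (tsumPowSucc B) d z ∧ z • d = ⁅tsumPowSucc C z, Λ + tsumPowSucc B z⁆ := by
  have hzM := norm_mul_lt_one_of_mem_ball hM hr hz
  have hd := (summable_norm_succ_mul_pow_smul hB hM hzM).of_norm.hasSum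
  refine ⟨_, hasDerivAt_tsumPowSucc hB hM hr hz hd, (hd.const_smul z).unique ?_⟩
  refine (h.hasSum_B hB hC hM hzM).congr_fun fun n => ?_
  rw [smul_smul, mul_left_comm, ← pow_succ']

end IsFormalSolution

theorem smul_lie_eq_lie_smul {R A : Type*} [CommSemiring R] [Ring A] [Algebra R A] (r : R)
    (x y : A) : r • ⁅x, y⁆ = ⁅x, r • y⁆ := by
  simp only [Ring.lie_def, smul_sub, mul_smul_comm, smul_mul_assoc]

section Recursion

variable {A : Type*} [Ring A] [Algebra ℚ A]

/-- The pair `(B n, C n)` of `IsFormalSolution`, computed over an arbitrary `ℚ`-algebra so that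
`map_schlesingerCoeffs` can transport it from `ℚ[θ₀, a]`. -/
def schlesingerCoeffs (J Λ : A) : ℕ → A × A
  | 0 => (⁅⁅J, -Λ⁆, Λ⁆, ⁅J, -Λ⁆)
  | n + 1 =>
    let Cn := ((n + 2 : ℚ)⁻¹) • ⁅J, (schlesingerCoeffs J Λ n).2 - (schlesingerCoeffs J Λ n).1⁆
    (((n + 2 : ℚ)⁻¹) • (⁅Cn, Λ⁆ + ∑ kl ∈ (antidiagonal n).attach,
      ⁅(schlesingerCoeffs J Λ kl.1.1).2, (schlesingerCoeffs J Λ kl.1.2).1⁆), Cn)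
  decreasing_by all_goals first | omega | (have := mem_antidiagonal.1 kl.2; omega)

variable (J Λ : A)

theorem schlesingerCoeffs_zero : schlesingerCoeffs J Λ 0 = (⁅⁅J, -Λ⁆, Λ⁆, ⁅J, -Λ⁆) := by
  rw [schlesingerCoeffs]

theorem snd_schlesingerCoeffs_succ (n : ℕ) : (schlesingerCoeffs J Λ (n + 1)).2 =
    ((n + 2 : ℚ)⁻¹) • ⁅J, (schlesingerCoeffs J Λ n).2 - (schlesingerCoeffs J Λ n).1⁆ := by
  rw [schlesingerCoeffs]

theorem fst_schlesingerCoeffs_succ (n : ℕ) : (schlesingerCoeffs J Λ (n + 1)).1 =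
    ((n + 2 : ℚ)⁻¹) • (⁅(schlesingerCoeffs J Λ (n + 1)).2, Λ⁆ + ∑ kl ∈ antidiagonal n,
      ⁅(schlesingerCoeffs J Λ kl.1).2, (schlesingerCoeffs J Λ kl.2).1⁆) := by
  rw [snd_schlesingerCoeffs_succ, schlesingerCoeffs, ← sum_attach (antidiagonal n)
    (fun kl => ⁅(schlesingerCoeffs J Λ kl.1).2, (schlesingerCoeffs J Λ kl.2).1⁆)]

theorem map_schlesingerCoeffs {A' : Type*} [Ring A'] [Algebra ℚ A'] (φ : A →ₐ[ℚ] A') (n : ℕ) :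
    schlesingerCoeffs (φ J) (φ Λ) n = Prod.map φ φ (schlesingerCoeffs J Λ n) := by
  induction n using Nat.strong_induction_on with
  | _ n ih =>
    have map_lie (x y : A) : φ ⁅x, y⁆ = ⁅φ x, φ y⁆ := by simp only [Ring.lie_def, map_sub, map_mul]
    cases n with
    | zero => simp [schlesingerCoeffs_zero, map_lie]
    | succ n =>
      have hsnd :
          (schlesingerCoeffs (φ J) (φ Λ) (n + 1)).2 = φ (schlesingerCoeffs J Λ (n + 1)).2 := by
        rw [snd_schlesingerCoeffs_succ, snd_schlesingerCoeffs_succ, ih n (by omega)]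
        simp [map_lie]
      refine Prod.ext ?_ hsnd
      rw [Prod.map_fst, fst_schlesingerCoeffs_succ, fst_schlesingerCoeffs_succ, hsnd]
      simp only [map_smul, map_add, map_sum, map_lie]
      congr 2
      refine sum_congr rfl fun kl hkl => ?_
      have hkl := mem_antidiagonal.1 hkl
      rw [ih kl.1 (by omega), ih kl.2 (by omega)]
      rfl

theorem exists_snd_schlesingerCoeffs_eq_lie (n : ℕ) :
    ∃ X, (schlesingerCoeffs J Λ n).2 = ⁅J, X⁆ := by
  cases n with
  | zero => exact ⟨-Λ, by rw [schlesingerCoeffs_zero]⟩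
  | succ n => exact ⟨_, (snd_schlesingerCoeffs_succ J Λ n).trans (smul_lie_eq_lie_smul _ _ _)⟩

theorem isFormalSolution_schlesingerCoeffs [Module ℂ A] [IsScalarTower ℚ ℂ A] :
    IsFormalSolution J Λ (fun n => (schlesingerCoeffs J Λ n).1)
      (fun n => (schlesingerCoeffs J Λ n).2) := by
  have cancel (n : ℕ) (X : A) : ((n + 2 : ℕ) : ℂ) • ((n + 2 : ℚ)⁻¹ • X) = X := by
    rw [← Rat.cast_smul_eq_qsmul ℂ, smul_smul]
    push_cast
    rw [mul_inv_cancel₀ (by norm_cast), one_smul]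
  refine ⟨by rw [schlesingerCoeffs_zero], by rw [schlesingerCoeffs_zero], fun n => ?_, fun n => ?_⟩
  · simp only [snd_schlesingerCoeffs_succ, cancel]
  · rw [fst_schlesingerCoeffs_succ, cancel]

end Recursion

section Concrete

open Matrix MvPolynomial

theorem Jmat_eq_diagonal : Jmat = diagonal ![1, -1] := by
  ext i j
  fin_cases i <;> fin_cases j <;> rfl

theorem Matrix.diagonal_lie_apply_self {R n : Type*} [CommRing R] [Fintype n] [DecidableEq n] (d : n → R)
    (X : Matrix n n R) (i : n) : ⁅diagonal d, X⁆ i i = 0 := by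
  rw [Ring.lie_def, Matrix.sub_apply, diagonal_mul, mul_diagonal, mul_comm, sub_self]

variable {R S : Type*} [CommRing R] [Algebra ℚ R] [CommRing S] [Algebra ℚ S]

/-- `Λ₀`, with `θ / 2` written `(2⁻¹ : ℚ) • θ` so that it also lives over `ℚ[θ₀, a]`. -/
def lambdaZero (θ a : R) : Matrix (Fin 2) (Fin 2) R :=
  !![(2⁻¹ : ℚ) • θ + a, -1; a * (θ + a), -((2⁻¹ : ℚ) • θ) - a]

theorem AlgHom.mapMatrix_lambdaZero (φ : R →ₐ[ℚ] S) (θ a : R) :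
    φ.mapMatrix (lambdaZero θ a) = lambdaZero (φ θ) (φ a) := by
  ext i j
  fin_cases i <;> fin_cases j <;> simp [lambdaZero]

theorem lambdaZero_complex (θ a : ℂ) :
    lambdaZero θ a = !![θ / 2 + a, -1; a * (θ + a), -θ / 2 - a] := by
  ext i j
  fin_cases i <;> fin_cases j <;> simp [lambdaZero, Rat.smul_def] <;> ring

theorem snd_schlesingerCoeffs_diagonal_apply_self {n : Type*} [Fintype n] [DecidableEq n]
    (d : n → R) (Λ : Matrix n n R) (k : ℕ) (i : n) :
    (schlesingerCoeffs (diagonal d) Λ k).2 i i = 0 := by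
  obtain ⟨X, hX⟩ := exists_snd_schlesingerCoeffs_eq_lie (diagonal d) Λ k
  rw [hX, diagonal_lie_apply_self]

theorem schlesingerCoeffs_eq_map_aeval (θ a : ℂ) (n : ℕ) :
    schlesingerCoeffs Jmat (lambdaZero θ a) n =
      Prod.map (fun X => X.map (aeval ![θ, a])) (fun X => X.map (aeval ![θ, a]))
        (schlesingerCoeffs (diagonal ![1, -1])
          (lambdaZero (X 0 : MvPolynomial (Fin 2) ℚ) (X 1)) n) := by
  have hJ : (aeval ![θ, a]).mapMatrix (diagonal ![(1 : MvPolynomial (Fin 2) ℚ), -1]) = Jmat := by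
    rw [Jmat_eq_diagonal]
    ext i j
    fin_cases i <;> fin_cases j <;> simp
  have hΛ : (aeval ![θ, a]).mapMatrix (lambdaZero (X 0 : MvPolynomial (Fin 2) ℚ) (X 1)) =
      lambdaZero θ a := by
    rw [AlgHom.mapMatrix_lambdaZero]
    simp
  rw [← hJ, ← hΛ, map_schlesingerCoeffs]
  rfl

end Concrete

theorem HasSum.matrix_apply {ι R m n : Type*} [AddCommMonoid R] [TopologicalSpace R]
    {f : ι → Matrix m n R} {s : Matrix m n R} (hf : HasSum f s) (i : m) (j : n) :
    HasSum (fun x => f x i j) (s i j) :=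
  Pi.hasSum.1 (Pi.hasSum.1 hf i) j

section MatrixSeries

-- Any submultiplicative norm does: only matrix entries occur in the final statement.
attribute [local instance] Matrix.linftyOpNormedRing Matrix.linftyOpNormedAlgebra

variable {m : Type*} [Fintype m] [DecidableEq m]

theorem HasDerivAt.matrix_apply {f : ℂ → Matrix m m ℂ} {f' : Matrix m m ℂ} {z : ℂ}
    (hf : HasDerivAt f f' z) (i j : m) : HasDerivAt (fun w => f w i j) (f' i j) z :=
  (Matrix.entryLinearMap ℂ ℂ i j).toContinuousLinearMap.hasFDerivAt.comp_hasDerivAt z hf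

theorem IsFormalSolution.exists_entrywise_solution {J Λ : Matrix m m ℂ} {B C : ℕ → Matrix m m ℂ}
    (h : IsFormalSolution J Λ B C) :
    ∃ R > (0 : ℝ), ∃ U₀ Uinf : ℂ → Matrix m m ℂ, ∀ z ∈ Metric.ball (0 : ℂ) R, ∀ i j,
      HasSum (fun n => B n i j * z ^ (n + 1)) (U₀ z i j) ∧
      HasSum (fun n => C n i j * z ^ (n + 1)) (Uinf z i j) ∧
      (∃ d, HasDerivAt (fun w => U₀ w i j) d z ∧ z * d = ⁅Uinf z, Λ + U₀ z⁆ i j) ∧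
      HasDerivAt (fun w => Uinf w i j) (⁅J, -Λ - U₀ z + Uinf z⁆ i j) z := by
  obtain ⟨K, M, hM, hBC⟩ := h.exists_norm_le
  have hB n := (hBC n).1
  have hC n := (hBC n).2
  have hr : (M + 1)⁻¹ * M < 1 := by
    rw [inv_mul_lt_iff₀ (by positivity)]
    linarith
  refine ⟨(M + 1)⁻¹, by positivity, tsumPowSucc B, tsumPowSucc C, fun z hz i j => ?_⟩
  have hzM := norm_mul_lt_one_of_mem_ball hM hr hz
  have entry (c : ℕ → Matrix m m ℂ) (hc : ∀ n, ‖c n‖ ≤ K * M ^ n) :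
      HasSum (fun n => c n i j * z ^ (n + 1)) (tsumPowSucc c z i j) :=
    (((summable_norm_pow_succ_smul hc hM hzM).of_norm.hasSum).matrix_apply i j).congr_fun
      fun n => by simp [mul_comm]
  obtain ⟨d, hd, hzd⟩ := h.exists_hasDerivAt_tsumPowSucc_B hB hC hM hr hz
  refine ⟨entry B hB, entry C hC, ⟨d i j, hd.matrix_apply i j, ?_⟩,
    (h.hasDerivAt_tsumPowSucc_C hB hC hM hr hz).matrix_apply i j⟩
  simpa using congrArg (· i j) hzd

end MatrixSeries

theorem schlesinger_taylor_matrix_solution_general (t0 a : ℂ) :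
    ∃ R > (0 : ℝ), ∃ U0 Ui : ℂ → Matrix (Fin 2) (Fin 2) ℂ,
      ∃ c0 ci : ℕ → Matrix (Fin 2) (Fin 2) ℂ,
        -- coefficients lie in ℚ[θ₀, a]
        (∀ n, ∀ i j : Fin 2, ∃ P : MvPolynomial (Fin 2) ℚ,
          c0 n i j = (MvPolynomial.aeval ![t0, a]) P) ∧
        (∀ n, ∀ i j : Fin 2, ∃ P : MvPolynomial (Fin 2) ℚ,
          ci n i j = (MvPolynomial.aeval ![t0, a]) P) ∧
        -- convergent power series representations `U(t) = Σ_{j≥1} U_j t^j`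
        (∀ t : ℂ, ‖t‖ < R → ∀ i j : Fin 2,
          Summable (fun n : ℕ => c0 n i j * t ^ (n + 1)) ∧
          Summable (fun n : ℕ => ci n i j * t ^ (n + 1)) ∧
          U0 t i j = (∑' n : ℕ, c0 n i j * t ^ (n + 1)) ∧
          Ui t i j = (∑' n : ℕ, ci n i j * t ^ (n + 1))) ∧
        -- holomorphy in a neighborhood of t = 0
        (∀ i j : Fin 2, AnalyticOnNhd ℂ (fun z => U0 z i j) (Metric.ball 0 R)) ∧
        (∀ i j : Fin 2, AnalyticOnNhd ℂ (fun z => Ui z i j) (Metric.ball 0 R)) ∧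
        -- the system, with Λ₀ = !![θ₀/2 + a, −1; a(θ₀+a), −θ₀/2 − a]
        (∀ t ∈ Metric.ball (0 : ℂ) R,
          (∀ i j : Fin 2, t * deriv (fun z => U0 z i j) t =
            (Ui t * (!![t0 / 2 + a, -1; a * (t0 + a), -t0 / 2 - a] + U0 t) -
             (!![t0 / 2 + a, -1; a * (t0 + a), -t0 / 2 - a] + U0 t) * Ui t) i j) ∧
          (∀ i j : Fin 2, t * deriv (fun z => Ui z i j) t =
            t * ((Jmat * (-(!![t0 / 2 + a, -1; a * (t0 + a), -t0 / 2 - a]) - U0 t + Ui t) -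
                  (-(!![t0 / 2 + a, -1; a * (t0 + a), -t0 / 2 - a]) - U0 t + Ui t) * Jmat) i j)) ∧
          -- the diagonal of U∞ vanishes identically
          Ui t 0 0 = 0 ∧ Ui t 1 1 = 0) := by
  obtain ⟨R, hR, U₀, Uinf, hU⟩ :=
    (isFormalSolution_schlesingerCoeffs Jmat (lambdaZero t0 a)).exists_entrywise_solution
  have hdiag (t : ℂ) (ht : t ∈ Metric.ball 0 R) (i : Fin 2) : Uinf t i i = 0 :=
    (hU t ht i i).2.1.unique (hasSum_zero.congr_fun fun n => by
      simp [Jmat_eq_diagonal, snd_schlesingerCoeffs_diagonal_apply_self])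
  refine ⟨R, hR, U₀, Uinf, fun n => (schlesingerCoeffs Jmat (lambdaZero t0 a) n).1,
    fun n => (schlesingerCoeffs Jmat (lambdaZero t0 a) n).2,
    fun n i j => ⟨_, congrArg (fun p => p.1 i j) (schlesingerCoeffs_eq_map_aeval t0 a n)⟩,
    fun n i j => ⟨_, congrArg (fun p => p.2 i j) (schlesingerCoeffs_eq_map_aeval t0 a n)⟩,
    fun t ht i j => ?_, fun i j => ?_, fun i j => ?_, fun t ht => ?_⟩
  · obtain ⟨h₀, hinf, -⟩ := hU t (mem_ball_zero_iff.2 ht) i j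
    exact ⟨h₀.summable, hinf.summable, h₀.tsum_eq.symm, hinf.tsum_eq.symm⟩
  · refine DifferentiableOn.analyticOnNhd (fun z hz => ?_) Metric.isOpen_ball
    obtain ⟨d, hd, -⟩ := (hU z hz i j).2.2.1
    exact hd.differentiableAt.differentiableWithinAt
  · exact DifferentiableOn.analyticOnNhd (fun z hz =>
      (hU z hz i j).2.2.2.differentiableAt.differentiableWithinAt) Metric.isOpen_ball
  · rw [← lambdaZero_complex]
    refine ⟨fun i j => ?_, fun i j => ?_, hdiag t ht 0, hdiag t ht 1⟩
    · obtain ⟨d, hd, hzd⟩ := (hU t ht i j).2.2.1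
      rw [hd.deriv, hzd, Ring.lie_def]
    · rw [(hU t ht i j).2.2.2.deriv, Ring.lie_def]

/-- **Proposition 5.1**: the system `t·dU₀/dt = [U∞, Λ₀+U₀]`,
`t·dU∞/dt = t[J, −Λ₀−U₀+U∞]` has a solution holomorphic near `t = 0`, given by
convergent power series (without constant terms) whose coefficient matrices have
entries in `ℚ[θ₀, a]`, and whose `U∞`-component has vanishing diagonal. -/
theorem schlesinger_taylor_matrix_solution (t0 a : ℂ) (ha : a ≠ 0) :
    ∃ R > (0 : ℝ), ∃ U0 Ui : ℂ → Matrix (Fin 2) (Fin 2) ℂ,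
      ∃ c0 ci : ℕ → Matrix (Fin 2) (Fin 2) ℂ,
        -- coefficients lie in ℚ[θ₀, a]
        (∀ n, ∀ i j : Fin 2, ∃ P : MvPolynomial (Fin 2) ℚ,
          c0 n i j = (MvPolynomial.aeval ![t0, a]) P) ∧
        (∀ n, ∀ i j : Fin 2, ∃ P : MvPolynomial (Fin 2) ℚ,
          ci n i j = (MvPolynomial.aeval ![t0, a]) P) ∧
        -- convergent power series representations `U(t) = Σ_{j≥1} U_j t^j`
        (∀ t : ℂ, ‖t‖ < R → ∀ i j : Fin 2,
          Summable (fun n : ℕ => c0 n i j * t ^ (n + 1)) ∧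
          Summable (fun n : ℕ => ci n i j * t ^ (n + 1)) ∧
          U0 t i j = (∑' n : ℕ, c0 n i j * t ^ (n + 1)) ∧
          Ui t i j = (∑' n : ℕ, ci n i j * t ^ (n + 1))) ∧
        -- holomorphy in a neighborhood of t = 0
        (∀ i j : Fin 2, AnalyticOnNhd ℂ (fun z => U0 z i j) (Metric.ball 0 R)) ∧
        (∀ i j : Fin 2, AnalyticOnNhd ℂ (fun z => Ui z i j) (Metric.ball 0 R)) ∧
        -- the system, with Λ₀ = !![θ₀/2 + a, −1; a(θ₀+a), −θ₀/2 − a]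
        (∀ t ∈ Metric.ball (0 : ℂ) R,
          (∀ i j : Fin 2, t * deriv (fun z => U0 z i j) t =
            (Ui t * (!![t0 / 2 + a, -1; a * (t0 + a), -t0 / 2 - a] + U0 t) -
             (!![t0 / 2 + a, -1; a * (t0 + a), -t0 / 2 - a] + U0 t) * Ui t) i j) ∧
          (∀ i j : Fin 2, t * deriv (fun z => Ui z i j) t =
            t * ((Jmat * (-(!![t0 / 2 + a, -1; a * (t0 + a), -t0 / 2 - a]) - U0 t + Ui t) -
                  (-(!![t0 / 2 + a, -1; a * (t0 + a), -t0 / 2 - a]) - U0 t + Ui t) * Jmat) i j)) ∧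
          -- the diagonal of U∞ vanishes identically
          Ui t 0 0 = 0 ∧ Ui t 1 1 = 0) :=
  schlesinger_taylor_matrix_solution_general t0 a
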